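/- Let N = (P,T,F) be a nonredundant workflow net, and suppose that k ≥ 0 and marking m ∈ N^P satisfy {i:k} →*_Z m (Z-reachability, where intermediate markings may be negative). Then there exist ℓ ≤ (‖T‖+2)^{|T|} · max(‖T‖, k) · |P|(|P|+2) and a marking m' ∈ N^P such that {i:ℓ} →* m' and {i:ℓ+k} →* m + m' under the standard (nonnegative) semantics. -/

import Mathlib

/-- A Petri net over places `P` and transitions `T`, given by pre/post arc weights. -/
structure PetriNet (P T : Type) where
  pre : T → P → ℕ
  post : T → P → ℕ

namespace PetriNet

variable {P T : Type}

/-- Transition `t` is enabled in marking `m`. -/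
def Enabled (N : PetriNet P T) (m : P → ℕ) (t : T) : Prop := ∀ p, N.pre t p ≤ m p

/-- Firing transition `t` in `m` yields `m'`. -/
def Fire (N : PetriNet P T) (m : P → ℕ) (t : T) (m' : P → ℕ) : Prop :=
  N.Enabled m t ∧ ∀ p, m' p = m p - N.pre t p + N.post t p

def Step (N : PetriNet P T) (m m' : P → ℕ) : Prop := ∃ t, N.Fire m t m'

/-- Reachability `m →* m'`. -/
def Reach (N : PetriNet P T) : (P → ℕ) → (P → ℕ) → Prop := Relation.ReflTransGen N.Step

/-- Effect of a transition, as an integer vector. -/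
def eff (N : PetriNet P T) (t : T) (p : P) : ℤ := (N.post t p : ℤ) - (N.pre t p : ℤ)

def ZStep (N : PetriNet P T) (m m' : P → ℤ) : Prop := ∃ t, ∀ p, m' p = m p + N.eff t p

/-- Z-reachability: no enabledness constraint, markings range over ℤ. -/
def ZReach (N : PetriNet P T) : (P → ℤ) → (P → ℤ) → Prop := Relation.ReflTransGen N.ZStep

/-- Maximal arc weight `‖T‖`. -/
def maxW (N : PetriNet P T) [Fintype P] [Fintype T] : ℕ :=
  Finset.univ.sup fun t => Finset.univ.sup fun p => max (N.pre t p) (N.post t p)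

/-- Edge relation of the underlying graph, on `P ⊕ T`. -/
def Edge (N : PetriNet P T) : (P ⊕ T) → (P ⊕ T) → Prop
  | Sum.inl p, Sum.inr t => 0 < N.pre t p
  | Sum.inr t, Sum.inl p => 0 < N.post t p
  | _, _ => False

/-- `N` is bounded from marking `m`. -/
def BoundedFrom (N : PetriNet P T) (m : P → ℕ) : Prop :=
  ∃ b : ℕ, ∀ m', N.Reach m m' → ∀ p, m' p ≤ b

/-- `N` is cyclic from marking `m`. -/
def CyclicFrom (N : PetriNet P T) (m : P → ℕ) : Prop :=
  ∀ m', N.Reach m m' → N.Reach m' m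

/-- Transition `t` is quasi-live from `m`. -/
def QuasiLiveT (N : PetriNet P T) (m : P → ℕ) (t : T) : Prop :=
  ∃ m', N.Reach m m' ∧ N.Enabled m' t

/-- `N` is quasi-live from `m`. -/
def QuasiLiveFrom (N : PetriNet P T) (m : P → ℕ) : Prop :=
  ∀ t, N.QuasiLiveT m t

/-- Transition `t` is live from `m`. -/
def LiveT (N : PetriNet P T) (m : P → ℕ) (t : T) : Prop :=
  ∀ m', N.Reach m m' → N.QuasiLiveT m' t

end PetriNet

/-- A workflow net: a Petri net with initial place `ini`, final place `fin`,
no production into `ini`, no consumption from `fin`, and every node on a path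
from `ini` to `fin` in the underlying graph. -/
structure WorkflowNet (P T : Type) extends PetriNet P T where
  ini : P
  fin : P
  ini_ne_fin : ini ≠ fin
  no_prod_ini : ∀ t, post t ini = 0
  no_cons_fin : ∀ t, pre t fin = 0
  on_path : ∀ v : P ⊕ T,
    Relation.ReflTransGen toPetriNet.Edge (Sum.inl ini) v ∧
    Relation.ReflTransGen toPetriNet.Edge v (Sum.inl fin)

namespace WorkflowNet

variable {P T : Type}

/-- The marking `{i : k}`. -/
def iniM [DecidableEq P] (N : WorkflowNet P T) (k : ℕ) : P → ℕ :=
  fun p => if p = N.ini then k else 0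

/-- The marking `{f : k}`. -/
def finM [DecidableEq P] (N : WorkflowNet P T) (k : ℕ) : P → ℕ :=
  fun p => if p = N.fin then k else 0

/-- `N` is `k`-sound. -/
def KSound [DecidableEq P] (N : WorkflowNet P T) (k : ℕ) : Prop :=
  ∀ m, N.toPetriNet.Reach (N.iniM k) m → N.toPetriNet.Reach m (N.finM k)

/-- `N` is generalised sound. -/
def GeneralisedSound [DecidableEq P] (N : WorkflowNet P T) : Prop :=
  ∀ k : ℕ, 1 ≤ k → N.KSound k

/-- `N` is structurally sound. -/
def StructurallySound [DecidableEq P] (N : WorkflowNet P T) : Prop :=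
  ∃ k : ℕ, 1 ≤ k ∧ N.KSound k

/-- All places of `N` are nonredundant. -/
def Nonredundant [DecidableEq P] (N : WorkflowNet P T) : Prop :=
  ∀ p : P, ∃ (k : ℕ) (m : P → ℕ), N.toPetriNet.Reach (N.iniM k) m ∧ 0 < m p

/-- `N` is strongly `k`-sound. -/
def StronglyKSound [DecidableEq P] (N : WorkflowNet P T) (k : ℕ) : Prop :=
  ∀ m : P → ℕ,
    N.toPetriNet.ZReach (fun p => ((N.iniM k) p : ℤ)) (fun p => (m p : ℤ)) →
    N.toPetriNet.Reach m (N.finM k)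

end WorkflowNet


/-!
Nonredundancy lets every place be marked from `(‖T‖ + 1) ^ |T|` initial tokens: follow a run
marking it and, whenever a transition fires for the first time, first multiply the current
marking by `‖T‖ + 1`; this enables the transition while keeping every marked place marked.
Summing over the places and scaling yields, from `ℓ` initial tokens, a marking `m'` with at
least `(|P| + 1) ‖T‖` tokens on every place. By the Steinitz lemma the transitions of the
`ℤ`-run can be reordered so that every intermediate `ℤ`-marking stays above `-|P| ‖T‖` in each
place, so with the buffer `m'` added the reordered run is firable from `{i : k} + m'` and ends
in `m + m'`.
-/

open Finset

namespace PetriNet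

variable {P T : Type} {N : PetriNet P T}

theorem Step.add_right {a b : P → ℕ} (h : N.Step a b) (x : P → ℕ) : N.Step (a + x) (b + x) := by
  obtain ⟨t, hen, hb⟩ := h
  refine ⟨t, fun p => (hen p).trans (Nat.le_add_right _ _), fun p => ?_⟩
  have := hen p
  simp only [Pi.add_apply, hb p]
  omega

theorem Reach.add_right {a b : P → ℕ} (h : N.Reach a b) (x : P → ℕ) : N.Reach (a + x) (b + x) :=
  Relation.ReflTransGen.lift (· + x) (fun _ _ (hs : N.Step _ _) => hs.add_right x) _ _ h

theorem Reach.add_left {a b : P → ℕ} (h : N.Reach a b) (x : P → ℕ) : N.Reach (x + a) (x + b) := by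
  simpa only [add_comm x] using h.add_right x

theorem Reach.add {a b c d : P → ℕ} (h₁ : N.Reach a b) (h₂ : N.Reach c d) :
    N.Reach (a + c) (b + d) :=
  (h₁.add_right c).trans (h₂.add_left b)

theorem Reach.sum {ι : Type*} {s : Finset ι} {a b : ι → P → ℕ}
    (h : ∀ i ∈ s, N.Reach (a i) (b i)) : N.Reach (∑ i ∈ s, a i) (∑ i ∈ s, b i) := by
  classical
  induction s using Finset.induction_on with
  | empty => exact Relation.ReflTransGen.refl
  | insert i s hi ih =>
    rw [sum_insert hi, sum_insert hi]
    exact (h i (mem_insert_self i s)).add (ih fun j hj => h j (mem_insert_of_mem hj))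

theorem Reach.nsmul {a b : P → ℕ} (h : N.Reach a b) (n : ℕ) : N.Reach (n • a) (n • b) := by
  simpa using Reach.sum (s := range n) fun _ _ => h

theorem ZReach.exists_list {a b : P → ℤ} (h : N.ZReach a b) :
    ∃ l : List T, ∀ p, b p = a p + (l.map (N.eff · p)).sum := by
  induction h with
  | refl => exact ⟨[], by simp⟩
  | tail _ hs ih =>
    obtain ⟨l, hl⟩ := ih
    obtain ⟨t, ht⟩ := hs
    exact ⟨l ++ [t], fun p => by simp [ht p, hl p, add_assoc]⟩

theorem reach_of_forall_pre_le (l : List T) {c c' : P → ℕ}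
    (hen : ∀ l₁ t l₂, l = l₁ ++ t :: l₂ → ∀ p, (N.pre t p : ℤ) ≤ c p + (l₁.map (N.eff · p)).sum)
    (hc' : ∀ p, (c' p : ℤ) = c p + (l.map (N.eff · p)).sum) : N.Reach c c' := by
  induction l generalizing c with
  | nil =>
    obtain rfl : c' = c := funext fun p => by simpa using hc' p
    exact Relation.ReflTransGen.refl
  | cons t l ih =>
    have ht : N.Enabled c t := fun p => by simpa using hen [] t l rfl p
    have hfire : ∀ p, ((c p - N.pre t p + N.post t p : ℕ) : ℤ) = c p + N.eff t p := fun p => by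
      have := ht p
      unfold eff
      omega
    refine Relation.ReflTransGen.head ⟨t, ht, fun p => rfl⟩
      (ih (fun l₁ s l₂ hl p => ?_) fun p => ?_)
    · simpa [hl, hfire, add_assoc] using hen (t :: l₁) s l₂ (by rw [hl]; rfl) p
    · simpa [hfire, add_assoc] using hc' p

variable [Fintype P] [Fintype T] (N)

theorem pre_le_maxW (t : T) (p : P) : N.pre t p ≤ N.maxW :=
  le_sup_of_le (mem_univ t) (le_sup_of_le (mem_univ p) (le_max_left _ _))

theorem neg_maxW_le_eff (t : T) (p : P) : -(N.maxW : ℤ) ≤ N.eff t p := by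
  have := N.pre_le_maxW t p
  unfold eff
  omega

theorem exists_step_smul_of_pre_pos {w : P → ℕ} {t : T} (ht : ∀ q, 0 < N.pre t q → 0 < w q) :
    ∃ w', N.Step ((N.maxW + 1) • w) w' ∧ ∀ q, (0 < w q ∨ 0 < N.post t q) → 0 < w' q := by
  have hlt : ∀ q, 0 < w q → N.pre t q < (N.maxW + 1) * w q := fun q hq =>
    (Nat.lt_succ_of_le (N.pre_le_maxW t q)).trans_le (Nat.le_mul_of_pos_right _ hq)
  refine ⟨fun q => (N.maxW + 1) * w q - N.pre t q + N.post t q,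
    ⟨t, fun q => ?_, fun q => rfl⟩, fun q hq => ?_⟩
  · rcases Nat.eq_zero_or_pos (N.pre t q) with h | h
    · simp [h]
    · exact (hlt q (ht q h)).le
  · show 0 < (N.maxW + 1) * w q - N.pre t q + N.post t q
    rcases hq with hq | hq
    · have := hlt q hq
      omega
    · omega

end PetriNet

namespace WorkflowNet

variable {P T : Type} {N : WorkflowNet P T}

variable (N) in
def Supplied (S : Finset T) (q : P) : Prop := q = N.ini ∨ ∃ t ∈ S, 0 < N.post t q

theorem supplied_insert [DecidableEq T] {S : Finset T} {t : T} {q : P} :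
    N.Supplied (insert t S) q ↔ 0 < N.post t q ∨ N.Supplied S q := by
  simp only [Supplied, exists_mem_insert]
  tauto

variable [DecidableEq P]

theorem iniM_eq_single (k : ℕ) : N.iniM k = Pi.single N.ini k := by
  funext p
  simp [iniM, Pi.single_apply]

theorem iniM_add (k l : ℕ) : N.iniM (k + l) = N.iniM k + N.iniM l := by
  simp [iniM_eq_single, Pi.single_add]

theorem iniM_mul (n k : ℕ) : N.iniM (n * k) = n • N.iniM k := by
  simp [iniM_eq_single, ← Pi.single_smul]

variable [Fintype P] [Fintype T]

theorem exists_supplied_of_reach {K : ℕ} {m : P → ℕ} (h : N.Reach (N.iniM K) m) :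
    ∃ S : Finset T, (∀ q, 0 < m q → N.Supplied S q) ∧
      ∃ w, N.Reach (N.iniM ((N.maxW + 1) ^ #S)) w ∧ ∀ q, N.Supplied S q → 0 < w q := by
  classical
  induction h with
  | refl =>
    refine ⟨∅, fun q hq => .inl ?_, N.iniM 1, Relation.ReflTransGen.refl, ?_⟩
    · by_contra hq'
      simp [iniM, hq'] at hq
    · rintro q (rfl | ⟨t, ht, -⟩)
      · simp [iniM]
      · simp at ht
  | @tail m m' _ hs ih =>
    obtain ⟨S, hmS, w, hw, hwS⟩ := ih
    obtain ⟨t, hen, hm'⟩ := hs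
    have hm'S : ∀ q, 0 < m' q → N.Supplied (insert t S) q := fun q hq => by
      rw [hm' q] at hq
      rw [supplied_insert]
      by_cases hpost : 0 < N.post t q
      · exact .inl hpost
      · exact .inr (hmS q (by omega))
    by_cases htS : t ∈ S
    · exact ⟨S, by simpa [htS] using hm'S, w, hw, hwS⟩
    obtain ⟨w', hstep, hw'⟩ := N.exists_step_smul_of_pre_pos (w := w) (t := t)
      fun q hq => hwS q (hmS q (hq.trans_le (hen q)))
    refine ⟨insert t S, hm'S, w', ?_, fun q hq => hw' q ?_⟩
    · rw [card_insert_of_notMem htS, pow_succ', iniM_mul]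
      exact (hw.nsmul _).tail hstep
    · rw [supplied_insert] at hq
      exact hq.symm.imp (hwS q) id

theorem Nonredundant.exists_reach_pos (hN : N.Nonredundant) (p : P) :
    ∃ w, N.Reach (N.iniM ((N.maxW + 1) ^ Fintype.card T)) w ∧ 0 < w p := by
  obtain ⟨K, m, hm, hmp⟩ := hN p
  obtain ⟨S, hmS, w, hw, hwS⟩ := exists_supplied_of_reach hm
  refine ⟨(N.maxW + 1) ^ (Fintype.card T - #S) • w, ?_, ?_⟩
  · have hpow : (N.maxW + 1) ^ Fintype.card T
        = (N.maxW + 1) ^ (Fintype.card T - #S) * (N.maxW + 1) ^ #S := by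
      rw [← pow_add, Nat.sub_add_cancel (card_le_univ S)]
    rw [hpow, iniM_mul]
    exact hw.nsmul _
  · simpa using hwS p (hmS p hmp)

theorem Nonredundant.exists_reach_forall_pos (hN : N.Nonredundant) :
    ∃ w, N.Reach (N.iniM (Fintype.card P * (N.maxW + 1) ^ Fintype.card T)) w ∧ ∀ p, 0 < w p := by
  choose w hw hwp using hN.exists_reach_pos
  refine ⟨∑ p, w p, ?_, fun q => ?_⟩
  · have := PetriNet.Reach.sum (s := univ) fun p _ => hw p
    rwa [sum_const, card_univ, ← iniM_mul] at this
  · rw [Finset.sum_apply]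
    exact (hwp q).trans_le (single_le_sum (f := (w · q)) (fun _ _ => Nat.zero_le _) (mem_univ q))

end WorkflowNet

namespace Steinitz

variable {ι P : Type*}

variable (v : ι → P → ℝ) in
def IsFracSelection (A : Finset ι) (c : ℝ) (w : P → ℝ) (μ : ι → ℝ) : Prop :=
  (∀ i ∈ A, μ i ∈ Set.Icc (0 : ℝ) 1) ∧ ∑ i ∈ A, μ i = c ∧ ∀ p, ∑ i ∈ A, μ i * v i p = w p

variable {v : ι → P → ℝ}

theorem exists_add_mul_mem_Icc {F : Finset ι} {μ ζ : ι → ℝ}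
    (hμ : ∀ i ∈ F, μ i ∈ Set.Icc (0 : ℝ) 1) (hζ : ∃ i ∈ F, ζ i ≠ 0) :
    ∃ t : ℝ, (∀ i ∈ F, μ i + t * ζ i ∈ Set.Icc (0 : ℝ) 1) ∧
      ∃ j ∈ F, μ j + t * ζ j ∉ Set.Ioo (0 : ℝ) 1 := by
  classical
  set E := {i ∈ F | ζ i ≠ 0}
  have hE : E.Nonempty := by
    obtain ⟨i, hi, h⟩ := hζ
    exact ⟨i, mem_filter.2 ⟨hi, h⟩⟩
  -- Moving along `ζ`, coordinate `i` leaves `[0, 1]` through the end `b i`, at time `cap i`.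
  set b : ι → ℝ := fun i => if 0 < ζ i then 1 else 0
  set cap : ι → ℝ := fun i => (b i - μ i) / ζ i
  have hcap : ∀ i ∈ E, μ i + cap i * ζ i = b i := fun i hi => by
    simp [cap, div_mul_cancel₀ _ (mem_filter.1 hi).2]
  have hcap0 : ∀ i ∈ E, 0 ≤ cap i := fun i hi => by
    obtain ⟨hiF, hζi⟩ := mem_filter.1 hi
    obtain ⟨h0, h1⟩ := hμ i hiF
    rcases hζi.lt_or_gt with h | h
    · exact div_nonneg_of_nonpos (by simp [b, h.not_gt, h0]) h.le
    · exact div_nonneg (by simp [b, h, h1]) h.le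
  obtain ⟨j, hjE, hj⟩ := exists_mem_eq_inf' hE cap
  refine ⟨cap j, fun i hi => ?_, j, (mem_filter.1 hjE).1, ?_⟩
  · by_cases hζi : ζ i = 0
    · simpa [hζi] using hμ i hi
    have hiE : i ∈ E := mem_filter.2 ⟨hi, hζi⟩
    have hle : cap j ≤ cap i := hj ▸ inf'_le cap hiE
    have h0 := hcap0 j hjE
    have hi_end := hcap i hiE
    obtain ⟨hμ0, hμ1⟩ := hμ i hi
    rcases Ne.lt_or_gt hζi with h | h
    · simp only [b, h.not_gt, if_false] at hi_end
      constructor <;> nlinarith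
    · simp only [b, h, if_true] at hi_end
      constructor <;> nlinarith
  · rw [hcap j hjE]
    simp only [b]
    split_ifs <;> simp

theorem IsFracSelection.smul {A : Finset ι} {c : ℝ} {w : P → ℝ} {μ : ι → ℝ}
    (hμ : IsFracSelection v A c w μ) {r : ℝ} (hr : r ∈ Set.Icc (0 : ℝ) 1) :
    IsFracSelection v A (r * c) (r • w) (r • μ) := by
  obtain ⟨hμ01, hμsum, hμv⟩ := hμ
  refine ⟨fun i hi => ?_, by simp [← mul_sum, hμsum],
    fun p => by simp [mul_assoc, ← mul_sum, hμv p]⟩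
  obtain ⟨h0, h1⟩ := hμ01 i hi
  exact ⟨mul_nonneg hr.1 h0, mul_le_one₀ hr.2 h0 h1⟩

theorem IsFracSelection.erase [DecidableEq ι] {A : Finset ι} {c : ℝ} {w : P → ℝ} {μ : ι → ℝ}
    (hμ : IsFracSelection v A c w μ) {j : ι} (hj : μ j = 0) :
    IsFracSelection v (A.erase j) c w μ := by
  obtain ⟨hμ01, hμsum, hμv⟩ := hμ
  refine ⟨fun i hi => hμ01 i (mem_of_mem_erase hi), by rwa [sum_erase _ hj], fun p => ?_⟩
  rw [sum_erase _ (by simp [hj])]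
  exact hμv p

theorem exists_eq_zero_of_few_fractional {A : Finset ι} {μ : ι → ℝ} {n : ℕ}
    (hμ : ∀ i ∈ A, μ i ∈ Set.Icc (0 : ℝ) 1) (hfrac : #{i ∈ A | μ i ∈ Set.Ioo (0 : ℝ) 1} ≤ n + 1)
    (hsum : ∑ i ∈ A, μ i + (n + 1) ≤ #A) : ∃ j ∈ A, μ j = 0 := by
  by_contra! hpos
  set F := {i ∈ A | μ i ∈ Set.Ioo (0 : ℝ) 1}
  have hF : ∑ i ∈ A, (1 - μ i) = ∑ i ∈ F, (1 - μ i) := by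
    refine (sum_subset (filter_subset _ _) fun i hiA hiF => ?_).symm
    have h1 : ¬ μ i < 1 := fun h => hiF (mem_filter.2 ⟨hiA, (hμ i hiA).1.lt_of_ne' (hpos i hiA), h⟩)
    linarith [(hμ i hiA).2]
  have hge : (n : ℝ) + 1 ≤ ∑ i ∈ F, (1 - μ i) := by
    rw [← hF, sum_sub_distrib, sum_const, nsmul_one]
    linarith
  rcases F.eq_empty_or_nonempty with hFe | hFne
  · rw [hFe, sum_empty] at hge
    linarith [(Nat.cast_nonneg n : (0 : ℝ) ≤ n)]
  · have hlt : ∑ i ∈ F, (1 - μ i) < #F := by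
      simpa using sum_lt_sum_of_nonempty hFne fun i hi =>
        show 1 - μ i < 1 by linarith [(mem_filter.1 hi).2.1]
    have : (#F : ℝ) ≤ n + 1 := by exact_mod_cast hfrac
    linarith

variable [Fintype P]

variable (v) in
theorem exists_affine_relation {F : Finset ι} (hF : Fintype.card P + 1 < #F) :
    ∃ ζ : ι → ℝ, (∀ i ∉ F, ζ i = 0) ∧ (∃ i ∈ F, ζ i ≠ 0) ∧
      ∑ i ∈ F, ζ i = 0 ∧ ∀ p, ∑ i ∈ F, ζ i * v i p = 0 := by
  have hdep : ¬ LinearIndependent ℝ fun i : F => ((1 : ℝ), v i) := fun h => by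
    have := h.fintype_card_le_finrank
    simp only [Fintype.card_coe, Module.finrank_prod, Module.finrank_self,
      Module.finrank_fintype_fun_eq_card] at this
    omega
  obtain ⟨g, hg, i, hi⟩ := Fintype.not_linearIndependent_iff.mp hdep
  set ζ : ι → ℝ := Function.extend Subtype.val g 0
  have hζ : ∀ i : F, ζ i = g i := Subtype.val_injective.extend_apply g 0
  have hsum : ∀ f : ι → ℝ, ∑ j ∈ F, ζ j * f j = ∑ j : F, g j * f j := fun f => by
    rw [← sum_coe_sort]
    simp [hζ]
  refine ⟨ζ, fun j hj => ?_, ⟨i, i.2, by rwa [hζ]⟩, ?_, fun p => ?_⟩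
  · exact Function.extend_apply' _ _ _ fun ⟨k, hk⟩ => hj (hk ▸ k.2)
  · simpa [mul_one] using (hsum 1).trans (by simpa [Prod.fst_sum] using congrArg Prod.fst hg)
  · simpa [hsum, Prod.snd_sum, Finset.sum_apply] using congrFun (congrArg Prod.snd hg) p

theorem IsFracSelection.exists_few_fractional [DecidableEq ι] {A : Finset ι} {c : ℝ}
    {w : P → ℝ} {μ : ι → ℝ} (hμ : IsFracSelection v A c w μ) :
    ∃ μ', IsFracSelection v A c w μ' ∧
      #{i ∈ A | μ' i ∈ Set.Ioo (0 : ℝ) 1} ≤ Fintype.card P + 1 := by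
  induction hn : #{i ∈ A | μ i ∈ Set.Ioo (0 : ℝ) 1} using Nat.strong_induction_on
    generalizing μ with
  | _ n ih =>
  by_cases hsmall : n ≤ Fintype.card P + 1
  · exact ⟨μ, hμ, hn ▸ hsmall⟩
  set F := {i ∈ A | μ i ∈ Set.Ioo (0 : ℝ) 1}
  obtain ⟨ζ, hζF, hζ, hζsum, hζv⟩ := exists_affine_relation v (F := F) (by omega)
  obtain ⟨t, ht, j, hjF, hj⟩ :=
    exists_add_mul_mem_Icc (fun i hi => Set.Ioo_subset_Icc_self (mem_filter.1 hi).2) hζ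
  have hζA : ∀ f : ι → ℝ, ∑ i ∈ A, ζ i * f i = ∑ i ∈ F, ζ i * f i := fun f =>
    (sum_subset (filter_subset _ _) fun i _ hi => by simp [hζF i hi]).symm
  obtain ⟨hμ01, hμsum, hμv⟩ := hμ
  have hμ' : IsFracSelection v A c w (fun i => μ i + t * ζ i) := by
    refine ⟨fun i hi => ?_, ?_, fun p => ?_⟩
    · by_cases hiF : i ∈ F
      · exact ht i hiF
      · simpa [hζF i hiF] using hμ01 i hi
    · have hζsumA : ∑ i ∈ A, ζ i = 0 := by simpa [hζsum] using hζA 1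
      simp [sum_add_distrib, ← mul_sum, hμsum, hζsumA]
    · simp only [add_mul, sum_add_distrib, mul_assoc, ← mul_sum, hζA, hζv, hμv p]
      simp
  refine ih _ ?_ hμ' rfl
  calc #{i ∈ A | μ i + t * ζ i ∈ Set.Ioo (0 : ℝ) 1} ≤ #(F.erase j) := by
        refine card_le_card fun i hi => ?_
        obtain ⟨hiA, hi⟩ := mem_filter.1 hi
        have hiF : i ∈ F := by
          by_contra hiF
          simp only [hζF i hiF, mul_zero, add_zero] at hi
          exact hiF (mem_filter.2 ⟨hiA, hi⟩)
        exact mem_erase.2 ⟨fun hij => hj (hij ▸ hi), hiF⟩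
    _ < n := hn ▸ card_erase_lt_of_mem hjF

variable [Fintype ι]

-- The invariant of the Grinberg–Sevastyanov proof of the Steinitz lemma.
variable (v) in
def Balanced (A : Finset ι) : Prop :=
  ∃ μ, IsFracSelection v A (#A - Fintype.card P)
    (fun p => (#A - Fintype.card P) / Fintype.card ι * ∑ i, v i p) μ

theorem balanced_univ (h : Fintype.card P ≤ Fintype.card ι) : Balanced v univ := by
  have hP : (Fintype.card P : ℝ) ≤ Fintype.card ι := by exact_mod_cast h
  set θ : ℝ := (Fintype.card ι - Fintype.card P) / Fintype.card ι
  have hθ : θ ∈ Set.Icc 0 1 :=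
    ⟨div_nonneg (by linarith) (Nat.cast_nonneg _),
      div_le_one_of_le₀ (by linarith [(Nat.cast_nonneg _ : (0 : ℝ) ≤ Fintype.card P)])
        (Nat.cast_nonneg _)⟩
  refine ⟨fun _ => θ, fun _ _ => hθ, ?_, fun p => by simp [θ, mul_sum]⟩
  rw [sum_const, card_univ, nsmul_eq_mul]
  rcases Nat.eq_zero_or_pos (Fintype.card ι) with h0 | h0
  · simp [θ, h0, Nat.le_zero.mp (h0 ▸ h)]
  · exact mul_div_cancel₀ _ (by positivity)

theorem Balanced.le_sum {A : Finset ι} (hA : Balanced v A) {Δ : ℝ} (hΔ : ∀ i p, -Δ ≤ v i p)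
    (p : P) : min 0 (∑ i, v i p) - Fintype.card P * Δ ≤ ∑ i ∈ A, v i p := by
  obtain ⟨μ, hμ01, hμsum, hμv⟩ := hA
  set θ : ℝ := (#A - Fintype.card P) / Fintype.card ι
  have hA : (#A : ℝ) ≤ Fintype.card ι := by exact_mod_cast card_le_univ A
  have hθ : θ ∈ Set.Icc 0 1 :=
    ⟨div_nonneg (hμsum ▸ sum_nonneg fun i hi => (hμ01 i hi).1) (Nat.cast_nonneg _),
      div_le_one_of_le₀ (by linarith [(Nat.cast_nonneg _ : (0 : ℝ) ≤ Fintype.card P)])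
        (Nat.cast_nonneg _)⟩
  have hsplit : ∑ i ∈ A, v i p = θ * ∑ i, v i p + ∑ i ∈ A, (1 - μ i) * v i p := by
    simp only [sub_mul, one_mul, sum_sub_distrib, hμv p]
    ring
  have hrest : -(Fintype.card P * Δ) ≤ ∑ i ∈ A, (1 - μ i) * v i p :=
    calc -(Fintype.card P * Δ) = ∑ i ∈ A, (1 - μ i) * -Δ := by
          rw [← sum_mul, sum_sub_distrib, hμsum]
          simp
      _ ≤ _ := sum_le_sum fun i hi =>
          mul_le_mul_of_nonneg_left (hΔ i p) (by linarith [(hμ01 i hi).2])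
  have hmin : min 0 (∑ i, v i p) ≤ θ * ∑ i, v i p := by
    rcases le_total 0 (∑ i, v i p) with h | h
    · exact (min_le_left _ _).trans (mul_nonneg hθ.1 h)
    · exact (min_le_right _ _).trans (by nlinarith [hθ.2])
  linarith

theorem Balanced.exists_erase [DecidableEq ι] {A : Finset ι} (hA : Balanced v A)
    (hcard : Fintype.card P < #A) : ∃ j ∈ A, Balanced v (A.erase j) := by
  -- Shrink the weights to total `#A - d - 1`; once at most `d + 1` are fractional, one vanishes.
  obtain ⟨μ₀, hμ₀⟩ := hA
  set d := Fintype.card P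
  obtain ⟨c, hc⟩ : ∃ c : ℝ, (#A : ℝ) - d = c + 1 := ⟨_, (sub_add_cancel _ 1).symm⟩
  have hc0 : 0 ≤ c := by
    have : (d : ℝ) + 1 ≤ #A := by exact_mod_cast hcard
    linarith
  rw [hc] at hμ₀
  have hμ₁ : IsFracSelection v A c (fun p => c / Fintype.card ι * ∑ i, v i p)
      ((c / (c + 1)) • μ₀) := by
    have hr : c / (c + 1) ∈ Set.Icc (0 : ℝ) 1 :=
      ⟨by positivity, div_le_one_of_le₀ (by linarith) (by linarith)⟩
    convert hμ₀.smul hr using 1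
    · field_simp
    · ext p
      simp only [Pi.smul_apply, smul_eq_mul]
      field_simp
  obtain ⟨μ, hμ, hfrac⟩ := hμ₁.exists_few_fractional
  obtain ⟨j, hjA, hj⟩ := exists_eq_zero_of_few_fractional hμ.1 hfrac (by linarith [hμ.2.1])
  refine ⟨j, hjA, μ, ?_⟩
  rw [cast_card_erase_of_mem hjA, sub_right_comm, hc, add_sub_cancel_right]
  exact hμ.erase hj

theorem exists_perm_toList_prefix_sum_ge [DecidableEq ι] {Δ : ℝ} (hΔ0 : 0 ≤ Δ)
    (hΔ : ∀ i p, -Δ ≤ v i p) (A : Finset ι) (hA : Balanced v A ∨ #A ≤ Fintype.card P) :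
    ∃ l : List ι, l.Perm A.toList ∧ ∀ k p,
      min 0 (∑ i, v i p) - Fintype.card P * Δ ≤ ((l.take k).map (v · p)).sum := by
  -- List the elements in reverse order of removal: every prefix is then balanced or small.
  induction A using Finset.strongInduction with
  | H A ih =>
  by_cases hsmall : #A ≤ Fintype.card P
  · refine ⟨A.toList, .refl _, fun k p => ?_⟩
    have hlen : (((A.toList.take k).map (v · p)).length : ℝ) ≤ Fintype.card P := by
      have : ((A.toList.take k).map (v · p)).length ≤ Fintype.card P := by
        simp only [List.length_map, List.length_take, length_toList]
        omega
      exact_mod_cast this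
    have hterm := List.card_nsmul_le_sum ((A.toList.take k).map (v · p)) (-Δ) (by
      simp only [List.mem_map]
      rintro _ ⟨i, -, rfl⟩
      exact hΔ i p)
    rw [nsmul_eq_mul] at hterm
    nlinarith [min_le_left 0 (∑ i, v i p)]
  · have hbal := hA.resolve_right hsmall
    obtain ⟨j, hjA, hj⟩ := hbal.exists_erase (by omega)
    obtain ⟨l, hl, hpre⟩ := ih _ (erase_ssubset hjA) (.inl hj)
    have hperm : (l ++ [j]).Perm A.toList := by
      have := toList_insert (notMem_erase j A)
      rw [insert_erase hjA] at this
      exact (List.perm_append_singleton j l).trans ((hl.cons j).trans this.symm)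
    refine ⟨l ++ [j], hperm, fun k p => ?_⟩
    by_cases hk : k ≤ l.length
    · rw [List.take_append_of_le_length hk]
      exact hpre k p
    · rw [List.take_of_length_le (by simp; omega), (hperm.map _).sum_eq, sum_map_toList]
      exact hbal.le_sum hΔ p

end Steinitz

theorem List.exists_perm_prefix_sum_ge {α P : Type*} [Fintype P] (l : List α) (f : α → P → ℤ)
    {Δ : ℕ} (hΔ : ∀ a p, -(Δ : ℤ) ≤ f a p) :
    ∃ l' : List α, l'.Perm l ∧ ∀ k p,
      min 0 (l.map (f · p)).sum - Fintype.card P * Δ ≤ ((l'.take k).map (f · p)).sum := by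
  obtain ⟨σ, hσ, hpre⟩ := Steinitz.exists_perm_toList_prefix_sum_ge
    (v := fun (i : Fin l.length) p => (f l[i.1] p : ℝ)) (Nat.cast_nonneg Δ)
    (fun i p => by exact_mod_cast hΔ _ p) Finset.univ
    ((le_or_gt (Fintype.card P) l.length).imp (fun h => Steinitz.balanced_univ (by simpa using h))
      fun h => by simpa using h.le)
  refine ⟨σ.map fun i => l[i.1], ?_, fun k p => ?_⟩
  · have : (Finset.univ : Finset (Fin l.length)).toList.Perm (List.finRange l.length) :=
      List.perm_of_nodup_nodup_toFinset_eq (Finset.nodup_toList _) (List.nodup_finRange _)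
        (by ext; simp)
    simpa [List.map_getElem_finRange] using (hσ.trans this).map fun i => l[i.1]
  · have := hpre k p
    rw [Fin.sum_univ_fun_getElem l (fun a => (f a p : ℝ))] at this
    rw [← List.map_take, List.map_map, ← Int.cast_le (R := ℝ)]
    push_cast [Int.cast_list_sum, List.map_map, Function.comp_def]
    exact this

namespace PetriNet

variable {P T : Type} [Fintype P] [Fintype T] {N : PetriNet P T}

theorem reach_add_of_zreach {a b x : P → ℕ}
    (h : N.ZReach (fun p => (a p : ℤ)) (fun p => (b p : ℤ)))
    (hx : ∀ p, (Fintype.card P + 1) * N.maxW ≤ x p) : N.Reach (a + x) (b + x) := by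
  obtain ⟨l, hl⟩ := h.exists_list
  obtain ⟨l', hperm, hpre⟩ := l.exists_perm_prefix_sum_ge N.eff N.neg_maxW_le_eff
  refine reach_of_forall_pre_le l' (fun l₁ t l₂ hl' p => ?_) fun p => ?_
  · have hprefix := hpre l₁.length p
    rw [hl', List.take_left] at hprefix
    have hmin : -(a p : ℤ) ≤ min 0 (l.map (N.eff · p)).sum :=
      le_min (by omega) (by linarith [hl p, (b p).cast_nonneg (α := ℤ)])
    have hpre_le : (N.pre t p : ℤ) ≤ N.maxW := by exact_mod_cast N.pre_le_maxW t p
    have hxp : ((Fintype.card P + 1) * N.maxW : ℤ) ≤ x p := by exact_mod_cast hx p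
    push_cast [Pi.add_apply]
    linarith
  · rw [(hperm.map _).sum_eq]
    push_cast [Pi.add_apply]
    linarith [hl p]

end PetriNet

/-- Z-reachability can be turned into reachability at the cost of a small extra
budget of initial tokens. -/
theorem zreach_to_reach {P T : Type} [DecidableEq P] [Fintype P] [Fintype T]
    (N : WorkflowNet P T) (hN : N.Nonredundant) (k : ℕ) (m : P → ℕ)
    (hzr : N.toPetriNet.ZReach (fun p => ((N.iniM k) p : ℤ)) (fun p => (m p : ℤ))) :
    ∃ ℓ : ℕ,
      ℓ ≤ (N.toPetriNet.maxW + 2) ^ (Fintype.card T) * max N.toPetriNet.maxW k *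
            (Fintype.card P * (Fintype.card P + 2)) ∧
      ∃ m' : P → ℕ, N.toPetriNet.Reach (N.iniM ℓ) m' ∧
        N.toPetriNet.Reach (N.iniM (ℓ + k)) (fun p => m p + m' p) := by
  obtain ⟨w, hw, hw_pos⟩ := hN.exists_reach_forall_pos
  set D := (Fintype.card P + 1) * N.maxW
  have hDw :
      N.Reach (N.iniM (D * (Fintype.card P * (N.maxW + 1) ^ Fintype.card T))) (D • w) := by
    rw [WorkflowNet.iniM_mul]
    exact hw.nsmul D
  refine ⟨_, ?_, D • w, hDw, ?_⟩
  · calc D * (Fintype.card P * (N.maxW + 1) ^ Fintype.card T)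
        = (N.maxW + 1) ^ Fintype.card T * N.maxW * (Fintype.card P * (Fintype.card P + 1)) := by
          ring
      _ ≤ _ := by gcongr <;> omega
  · have hrun : N.Reach (N.iniM k + D • w) (m + D • w) :=
      PetriNet.reach_add_of_zreach hzr fun p => by
        simpa using Nat.le_mul_of_pos_right D (hw_pos p)
    rw [WorkflowNet.iniM_add, add_comm (N.iniM _)]
    exact (hDw.add_left _).trans hrun
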